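/- Let n ≥ 2 and let f be the rotation map f(x) = (x₁ cos θ − x₂ sin θ, x₂ cos θ + x₁ sin θ, x₃, …, xₙ) with θ = log(x₁² + x₂²). Then at every point x with x₁² + x₂² > 0, the derivative A = f′(x) satisfies ‖A‖ = 1 + √2 and l(A) = √2 − 1; consequently H_I(A) = H_O(A) = (1 + √2)ⁿ. -/

import Mathlib

open Metric

/-- The rotation map
`f(x) = (x₁ cos θ − x₂ sin θ, x₂ cos θ + x₁ sin θ, x₃, …, xₙ)` with
`θ = log (x₁² + x₂²)`. -/
noncomputable def rotMap (n : ℕ) (hn : 2 ≤ n)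
    (x : EuclideanSpace ℝ (Fin n)) : EuclideanSpace ℝ (Fin n) :=
  (WithLp.equiv 2 (Fin n → ℝ)).symm fun i =>
    let θ : ℝ := Real.log (x ⟨0, by omega⟩ ^ 2 + x ⟨1, by omega⟩ ^ 2)
    if (i : ℕ) = 0 then
      x ⟨0, by omega⟩ * Real.cos θ - x ⟨1, by omega⟩ * Real.sin θ
    else if (i : ℕ) = 1 then
      x ⟨1, by omega⟩ * Real.cos θ + x ⟨0, by omega⟩ * Real.sin θ
    else x i

/-- `l(A) = min_{|h|=1} |A h|`. -/
noncomputable def minNorm (n : ℕ)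
    (A : EuclideanSpace ℝ (Fin n) →L[ℝ] EuclideanSpace ℝ (Fin n)) : ℝ :=
  sInf ((fun h => ‖A h‖) '' sphere (0 : EuclideanSpace ℝ (Fin n)) 1)

/-- Inner dilatation coefficient `H_I(A) = |det A| / l(A)^n`. -/
noncomputable def innerDil (n : ℕ)
    (A : EuclideanSpace ℝ (Fin n) →L[ℝ] EuclideanSpace ℝ (Fin n)) : ℝ :=
  |LinearMap.det (A : EuclideanSpace ℝ (Fin n) →ₗ[ℝ] EuclideanSpace ℝ (Fin n))| /
    (minNorm n A) ^ n

/-- Outer dilatation coefficient `H_O(A) = ‖A‖^n / |det A|`. -/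
noncomputable def outerDil (n : ℕ)
    (A : EuclideanSpace ℝ (Fin n) →L[ℝ] EuclideanSpace ℝ (Fin n)) : ℝ :=
  ‖A‖ ^ n /
    |LinearMap.det (A : EuclideanSpace ℝ (Fin n) →ₗ[ℝ] EuclideanSpace ℝ (Fin n))|

/-!
Let `P` be the orthogonal projection onto the plane spanned by orthonormal `e₀, e₁` (here the
`x₁x₂`-plane), `J` the quarter turn of that plane and `R t = 1 + (cos t - 1) P + (sin t) J` its
rotation by `t`, so that `f x = R (log ‖P x‖²) x`. Since `R' t = R t ∘ J`, the derivative of `f`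
at `x` is `R (log ‖P x‖²) ∘ S` with the shear `S h = h + 2 ⟪u, h⟫ v` along the orthonormal pair
`u = P x / ‖P x‖`, `v = J x / ‖P x‖`. The rotation is an isometry, and
`‖S h‖² = ‖h‖² + 4 ⟪u, h⟫ ⟪v, h⟫ + 4 ⟪u, h⟫²` lies, by Bessel's inequality, between
`(√2 - 1)² ‖h‖²` and `(√2 + 1)² ‖h‖²`, with equality at `(1 - √2) u + v` and `(√2 + 1) u + v`
respectively: `√2 ± 1` are the singular values of the shear matrix `[[1, 0], [2, 1]]`.
Finally `det S = 1 + 2 ⟪u, v⟫ = 1` and `|det R| = 1`.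
-/

open Real
open scoped RealInnerProductSpace

theorem LinearMap.det_id_add_smulRight {R M : Type*} [CommRing R] [AddCommGroup M] [Module R M]
    [Module.Free R M] [Module.Finite R M] (f : M →ₗ[R] R) (x : M) :
    LinearMap.det (LinearMap.id + f.smulRight x) = 1 + f x := by
  classical
  let b := Module.Free.chooseBasis R M
  rw [← LinearMap.det_toMatrix b, map_add, LinearMap.toMatrix_id, LinearMap.toMatrix_smulRight,
    Matrix.vecMulVec_eq (ι := Unit), Matrix.det_one_add_replicateCol_mul_replicateRow]
  congr 1
  calc _ = f (∑ i, b.repr x i • b i) := by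
        simp only [dotProduct, Function.comp_apply, map_sum, map_smul, smul_eq_mul, mul_comm]
    _ = f x := by rw [b.sum_repr]

namespace ContinuousLinearMap

variable {E F : Type*} [NormedAddCommGroup E] [NormedSpace ℝ E] [NormedAddCommGroup F]
  [NormedSpace ℝ F] {T : E →L[ℝ] F} {c : ℝ} {h₀ : E}

theorem opNorm_eq_of_le_of_attained (hc : 0 ≤ c) (hle : ∀ h, ‖T h‖ ≤ c * ‖h‖) (h₀_ne : h₀ ≠ 0)
    (hattained : ‖T h₀‖ = c * ‖h₀‖) : ‖T‖ = c := by
  refine le_antisymm (T.opNorm_le_bound hc hle) ?_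
  have := T.le_opNorm h₀
  rw [hattained] at this
  exact le_of_mul_le_mul_right this (norm_pos_iff.2 h₀_ne)

theorem sInf_norm_image_sphere_eq_of_le_of_attained (hle : ∀ h, c * ‖h‖ ≤ ‖T h‖)
    (h₀_ne : h₀ ≠ 0) (hattained : ‖T h₀‖ = c * ‖h₀‖) :
    sInf ((fun h => ‖T h‖) '' sphere (0 : E) 1) = c := by
  refine IsLeast.csInf_eq ⟨⟨‖h₀‖⁻¹ • h₀, ?_, ?_⟩, ?_⟩
  · simp [norm_smul, h₀_ne]
  · simp only [map_smul, norm_smul, norm_inv, norm_norm, hattained]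
    field_simp
  · rintro _ ⟨h, hh, rfl⟩
    simpa [mem_sphere_zero_iff_norm.1 hh] using hle h

end ContinuousLinearMap

section InnerProductSpace

variable {E : Type*} [NormedAddCommGroup E] [InnerProductSpace ℝ E]

section Orthonormal

variable {u v : E} (hu : ‖u‖ = 1) (hv : ‖v‖ = 1) (huv : ⟪u, v⟫ = 0)
include hu hv huv

theorem inner_sq_add_inner_sq_le_norm_sq (h : E) : ⟪u, h⟫ ^ 2 + ⟪v, h⟫ ^ 2 ≤ ‖h‖ ^ 2 := by
  have := real_inner_self_nonneg (x := h - ⟪u, h⟫ • u - ⟪v, h⟫ • v)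
  simp only [inner_sub_left, inner_sub_right, inner_smul_left, inner_smul_right,
    real_inner_self_eq_norm_sq, hu, hv, huv, real_inner_comm u v, real_inner_comm u h,
    real_inner_comm v h, conj_trivial] at this
  nlinarith

theorem norm_smul_add_smul_sq (a b : ℝ) : ‖a • u + b • v‖ ^ 2 = a ^ 2 + b ^ 2 := by
  rw [← real_inner_self_eq_norm_sq]
  simp only [inner_add_left, inner_add_right, inner_smul_left, inner_smul_right,
    real_inner_self_eq_norm_sq, hu, hv, huv, real_inner_comm u v, conj_trivial]
  ring

theorem smul_add_smul_ne_zero (a : ℝ) {b : ℝ} (hb : b ≠ 0) : a • u + b • v ≠ 0 := by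
  rw [← norm_ne_zero_iff, ← pow_ne_zero_iff two_ne_zero, norm_smul_add_smul_sq hu hv huv]
  positivity

end Orthonormal

noncomputable def shear (u v : E) : E →L[ℝ] E := 1 + (innerSL ℝ u).smulRight v

@[simp] theorem shear_apply (u v h : E) : shear u v h = h + ⟪u, h⟫ • v := by
  simp [shear]

theorem det_shear [FiniteDimensional ℝ E] (u v : E) :
    LinearMap.det (shear u v : E →ₗ[ℝ] E) = 1 + ⟪u, v⟫ := by
  have : (shear u v : E →ₗ[ℝ] E) = LinearMap.id + (innerₛₗ ℝ u).smulRight v := by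
    ext h; simp
  rw [this, LinearMap.det_id_add_smulRight]
  simp

section ShearOrthonormal

variable {u v : E} (hu : ‖u‖ = 1) (hv : ‖v‖ = 1) (huv : ⟪u, v⟫ = 0)

include hv in
theorem norm_shear_two_smul_apply_sq (h : E) :
    ‖shear u ((2 : ℝ) • v) h‖ ^ 2 = ‖h‖ ^ 2 + 4 * ⟪u, h⟫ * ⟪v, h⟫ + 4 * ⟪u, h⟫ ^ 2 := by
  rw [shear_apply, ← real_inner_self_eq_norm_sq, ← real_inner_self_eq_norm_sq]
  simp only [inner_add_left, inner_add_right, inner_smul_left, inner_smul_right,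
    real_inner_self_eq_norm_sq, hv, real_inner_comm v h, conj_trivial]
  ring

include hu hv huv

theorem norm_shear_two_smul_apply_le (h : E) :
    ‖shear u ((2 : ℝ) • v) h‖ ≤ (1 + √2) * ‖h‖ := by
  have hs : √2 ^ 2 = 2 := sq_sqrt zero_le_two
  have hs1 : 1 ≤ √2 := one_le_sqrt.2 one_le_two
  set a := ⟪u, h⟫
  set b := ⟪v, h⟫
  have key : ((1 + √2) * ‖h‖) ^ 2 - ‖shear u ((2 : ℝ) • v) h‖ ^ 2
      = (2 + 2 * √2) * (‖h‖ ^ 2 - a ^ 2 - b ^ 2) + (2 * √2 - 2) * (a - (√2 + 1) * b) ^ 2 := by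
    rw [norm_shear_two_smul_apply_sq hv]
    linear_combination (‖h‖ ^ 2 + 4 * a * b - 2 * (√2 + 1) * b ^ 2) * hs
  have hbessel := inner_sq_add_inner_sq_le_norm_sq hu hv huv h
  refine (pow_le_pow_iff_left₀ (norm_nonneg _) (by positivity) two_ne_zero).1 (sub_nonneg.1 ?_)
  rw [key]
  exact add_nonneg (mul_nonneg (by positivity) (by linarith))
    (mul_nonneg (by linarith) (sq_nonneg _))

theorem sqrt_two_sub_one_mul_norm_le_norm_shear_two_smul_apply (h : E) :
    (√2 - 1) * ‖h‖ ≤ ‖shear u ((2 : ℝ) • v) h‖ := by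
  have hs : √2 ^ 2 = 2 := sq_sqrt zero_le_two
  have hs1 : 1 ≤ √2 := one_le_sqrt.2 one_le_two
  set a := ⟪u, h⟫
  set b := ⟪v, h⟫
  have key : ‖shear u ((2 : ℝ) • v) h‖ ^ 2 - ((√2 - 1) * ‖h‖) ^ 2
      = (2 * √2 - 2) * (‖h‖ ^ 2 - a ^ 2 - b ^ 2) + (2 + 2 * √2) * (a + (√2 - 1) * b) ^ 2 := by
    rw [norm_shear_two_smul_apply_sq hv]
    linear_combination (-‖h‖ ^ 2 - 4 * a * b - 2 * (√2 - 1) * b ^ 2) * hs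
  have hbessel := inner_sq_add_inner_sq_le_norm_sq hu hv huv h
  refine (pow_le_pow_iff_left₀ (by nlinarith [norm_nonneg h]) (norm_nonneg _) two_ne_zero).1
    (sub_nonneg.1 ?_)
  rw [key]
  exact add_nonneg (mul_nonneg (by linarith) (by linarith))
    (mul_nonneg (by positivity) (sq_nonneg _))

theorem norm_shear_two_smul_apply_smul_add_smul {a b c : ℝ} (hc : 0 ≤ c)
    (habc : a ^ 2 + (b + 2 * a) ^ 2 = c ^ 2 * (a ^ 2 + b ^ 2)) :
    ‖shear u ((2 : ℝ) • v) (a • u + b • v)‖ = c * ‖a • u + b • v‖ := by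
  have himage : shear u ((2 : ℝ) • v) (a • u + b • v) = a • u + (b + 2 * a) • v := by
    simp only [shear_apply, inner_add_right, inner_smul_right, real_inner_self_eq_norm_sq, hu, huv]
    module
  rw [← pow_left_inj₀ (norm_nonneg _) (by positivity) two_ne_zero, himage, mul_pow,
    norm_smul_add_smul_sq hu hv huv, norm_smul_add_smul_sq hu hv huv, habc]

theorem norm_shear_two_smul : ‖shear u ((2 : ℝ) • v)‖ = 1 + √2 := by
  have hs : √2 ^ 2 = 2 := sq_sqrt zero_le_two
  refine (shear u _).opNorm_eq_of_le_of_attained (by positivity)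
    (norm_shear_two_smul_apply_le hu hv huv) (smul_add_smul_ne_zero hu hv huv (√2 + 1) one_ne_zero)
    (norm_shear_two_smul_apply_smul_add_smul hu hv huv (by positivity) ?_)
  linear_combination -(√2 + 2) ^ 2 * hs

theorem sInf_norm_shear_two_smul_apply_image_sphere :
    sInf ((fun h => ‖shear u ((2 : ℝ) • v) h‖) '' sphere (0 : E) 1) = √2 - 1 := by
  have hs : √2 ^ 2 = 2 := sq_sqrt zero_le_two
  have hs1 : 1 ≤ √2 := one_le_sqrt.2 one_le_two
  refine (shear u _).sInf_norm_image_sphere_eq_of_le_of_attained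
    (sqrt_two_sub_one_mul_norm_le_norm_shear_two_smul_apply hu hv huv)
    (smul_add_smul_ne_zero hu hv huv (1 - √2) one_ne_zero)
    (norm_shear_two_smul_apply_smul_add_smul hu hv huv (by linarith) ?_)
  linear_combination -(√2 - 2) ^ 2 * hs

end ShearOrthonormal

section Plane

variable (e₀ e₁ : E)

noncomputable def planeProj : E →L[ℝ] E :=
  (innerSL ℝ e₀).smulRight e₀ + (innerSL ℝ e₁).smulRight e₁

noncomputable def planeQuarterTurn : E →L[ℝ] E :=
  (innerSL ℝ e₀).smulRight e₁ - (innerSL ℝ e₁).smulRight e₀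

noncomputable def planeRotation (t : ℝ) : E →L[ℝ] E :=
  1 + (cos t - 1) • planeProj e₀ e₁ + sin t • planeQuarterTurn e₀ e₁

noncomputable def planeSpiral (x : E) : E :=
  planeRotation e₀ e₁ (log (‖planeProj e₀ e₁ x‖ ^ 2)) x

variable {e₀ e₁}

@[simp] theorem planeProj_apply (y : E) : planeProj e₀ e₁ y = ⟪e₀, y⟫ • e₀ + ⟪e₁, y⟫ • e₁ := by
  simp [planeProj]

@[simp] theorem planeQuarterTurn_apply (y : E) :
    planeQuarterTurn e₀ e₁ y = ⟪e₀, y⟫ • e₁ - ⟪e₁, y⟫ • e₀ := by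
  simp [planeQuarterTurn]

theorem planeRotation_apply (t : ℝ) (y : E) :
    planeRotation e₀ e₁ t y =
      y + (cos t - 1) • planeProj e₀ e₁ y + sin t • planeQuarterTurn e₀ e₁ y := by
  simp [planeRotation]

variable (h₀ : ‖e₀‖ = 1) (h₁ : ‖e₁‖ = 1) (h₀₁ : ⟪e₀, e₁⟫ = 0)
include h₀ h₁ h₀₁

theorem planeRotation_comp_planeQuarterTurn (t : ℝ) :
    (planeRotation e₀ e₁ t).comp (planeQuarterTurn e₀ e₁) =
      -sin t • planeProj e₀ e₁ + cos t • planeQuarterTurn e₀ e₁ := by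
  ext y
  simp only [ContinuousLinearMap.comp_apply, planeRotation_apply, add_apply,
    smul_apply, planeProj_apply, planeQuarterTurn_apply, inner_sub_right,
    inner_smul_right, real_inner_self_eq_norm_sq, h₀, h₁, h₀₁, real_inner_comm e₀ e₁]
  module

theorem hasDerivAt_planeRotation (t : ℝ) :
    HasDerivAt (planeRotation e₀ e₁) ((planeRotation e₀ e₁ t).comp (planeQuarterTurn e₀ e₁)) t := by
  rw [planeRotation_comp_planeQuarterTurn h₀ h₁ h₀₁]
  have hcos := (((hasDerivAt_cos t).sub_const 1).smul_const (planeProj e₀ e₁)).const_add 1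
  have hsin := (hasDerivAt_sin t).smul_const (planeQuarterTurn e₀ e₁)
  exact hcos.add hsin

theorem norm_planeRotation_apply (t : ℝ) (y : E) : ‖planeRotation e₀ e₁ t y‖ = ‖y‖ := by
  rw [← sq_eq_sq₀ (norm_nonneg _) (norm_nonneg _), ← real_inner_self_eq_norm_sq,
    ← real_inner_self_eq_norm_sq, planeRotation_apply]
  simp only [planeProj_apply, planeQuarterTurn_apply, inner_add_left, inner_add_right,
    inner_sub_left, inner_sub_right, inner_smul_left, inner_smul_right,
    real_inner_self_eq_norm_sq, h₀, h₁, h₀₁, real_inner_comm e₀ e₁, real_inner_comm e₀ y,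
    real_inner_comm e₁ y, conj_trivial]
  linear_combination (⟪e₀, y⟫ ^ 2 + ⟪e₁, y⟫ ^ 2) * sin_sq_add_cos_sq t

theorem abs_det_planeRotation [FiniteDimensional ℝ E] (t : ℝ) :
    |LinearMap.det (planeRotation e₀ e₁ t : E →ₗ[ℝ] E)| = 1 := by
  rw [← LinearMap.normDet_eq_abs_det]
  exact LinearIsometry.normDet_eq_one ⟨_, norm_planeRotation_apply h₀ h₁ h₀₁ t⟩

theorem inner_planeProj_planeProj (x y : E) :
    ⟪planeProj e₀ e₁ x, planeProj e₀ e₁ y⟫ = ⟪planeProj e₀ e₁ x, y⟫ := by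
  simp only [planeProj_apply, inner_add_left, inner_add_right, inner_smul_left, inner_smul_right,
    real_inner_self_eq_norm_sq, h₀, h₁, h₀₁, real_inner_comm e₀ e₁, conj_trivial]
  ring

theorem norm_planeProj_apply_sq (x : E) :
    ‖planeProj e₀ e₁ x‖ ^ 2 = ⟪e₀, x⟫ ^ 2 + ⟪e₁, x⟫ ^ 2 := by
  rw [← real_inner_self_eq_norm_sq, inner_planeProj_planeProj h₀ h₁ h₀₁]
  simp only [planeProj_apply, inner_add_left, inner_smul_left, conj_trivial]
  ring

theorem inner_planeProj_planeQuarterTurn (x : E) :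
    ⟪planeProj e₀ e₁ x, planeQuarterTurn e₀ e₁ x⟫ = 0 := by
  simp only [planeProj_apply, planeQuarterTurn_apply, inner_add_left, inner_sub_right,
    inner_smul_left, inner_smul_right, real_inner_self_eq_norm_sq, h₀, h₁, h₀₁,
    real_inner_comm e₀ e₁, conj_trivial]
  ring

theorem norm_planeQuarterTurn_apply (x : E) :
    ‖planeQuarterTurn e₀ e₁ x‖ = ‖planeProj e₀ e₁ x‖ := by
  rw [← sq_eq_sq₀ (norm_nonneg _) (norm_nonneg _), ← real_inner_self_eq_norm_sq,
    ← real_inner_self_eq_norm_sq]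
  simp only [planeProj_apply, planeQuarterTurn_apply, inner_add_left, inner_add_right,
    inner_sub_left, inner_sub_right, inner_smul_left, inner_smul_right,
    real_inner_self_eq_norm_sq, h₀, h₁, h₀₁, real_inner_comm e₀ e₁, conj_trivial]
  ring

theorem hasFDerivAt_planeSpiral {x : E} (hx : planeProj e₀ e₁ x ≠ 0) :
    HasFDerivAt (planeSpiral e₀ e₁)
      ((planeRotation e₀ e₁ (log (‖planeProj e₀ e₁ x‖ ^ 2))).comp
        (shear (planeProj e₀ e₁ x) ((2 / ‖planeProj e₀ e₁ x‖ ^ 2) • planeQuarterTurn e₀ e₁ x)))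
      x := by
  have hθ := ((planeProj e₀ e₁).hasFDerivAt.norm_sq).log (by positivity)
  have hR := ((hasDerivAt_planeRotation h₀ h₁ h₀₁ _).hasFDerivAt.comp x hθ).clm_apply
    (hasFDerivAt_id x)
  refine hR.congr_fderiv ?_
  ext h
  simp only [add_apply, ContinuousLinearMap.comp_apply, ContinuousLinearMap.id_apply,
    ContinuousLinearMap.flip_apply, ContinuousLinearMap.toSpanSingleton_apply, smul_apply,
    innerSL_apply_apply, Function.comp_apply, id, shear_apply, map_add, map_smul,
    inner_planeProj_planeProj h₀ h₁ h₀₁, nsmul_eq_mul, Nat.cast_ofNat]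
  module

theorem exists_fderiv_planeSpiral_eq {x : E} (hx : planeProj e₀ e₁ x ≠ 0) :
    ∃ t u v, ‖u‖ = 1 ∧ ‖v‖ = 1 ∧ ⟪u, v⟫ = 0 ∧
      fderiv ℝ (planeSpiral e₀ e₁) x = (planeRotation e₀ e₁ t).comp (shear u ((2 : ℝ) • v)) := by
  set p := planeProj e₀ e₁ x
  set q := planeQuarterTurn e₀ e₁ x
  have hp : ‖p‖ ≠ 0 := norm_ne_zero_iff.2 hx
  have hq : ‖q‖ = ‖p‖ := norm_planeQuarterTurn_apply h₀ h₁ h₀₁ x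
  have hpq : ⟪p, q⟫ = 0 := inner_planeProj_planeQuarterTurn h₀ h₁ h₀₁ x
  refine ⟨log (‖p‖ ^ 2), ‖p‖⁻¹ • p, ‖p‖⁻¹ • q, ?_, ?_, ?_, ?_⟩
  · simp [norm_smul, hp]
  · simp [norm_smul, hq, hp]
  · simp [inner_smul_left, inner_smul_right, hpq]
  · rw [(hasFDerivAt_planeSpiral h₀ h₁ h₀₁ hx).fderiv]
    congr 1
    ext h
    simp only [shear_apply, inner_smul_left, conj_trivial]
    module

theorem norm_fderiv_planeSpiral {x : E} (hx : planeProj e₀ e₁ x ≠ 0) :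
    ‖fderiv ℝ (planeSpiral e₀ e₁) x‖ = 1 + √2 := by
  obtain ⟨t, u, v, hu, hv, huv, hD⟩ := exists_fderiv_planeSpiral_eq h₀ h₁ h₀₁ hx
  rw [hD, ← norm_shear_two_smul hu hv huv]
  exact ContinuousLinearMap.opNorm_ext _ _ fun h => norm_planeRotation_apply h₀ h₁ h₀₁ t _

theorem sInf_norm_fderiv_planeSpiral_apply_image_sphere {x : E} (hx : planeProj e₀ e₁ x ≠ 0) :
    sInf ((fun h => ‖fderiv ℝ (planeSpiral e₀ e₁) x h‖) '' sphere (0 : E) 1) = √2 - 1 := by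
  obtain ⟨t, u, v, hu, hv, huv, hD⟩ := exists_fderiv_planeSpiral_eq h₀ h₁ h₀₁ hx
  rw [← sInf_norm_shear_two_smul_apply_image_sphere hu hv huv, hD]
  simp only [ContinuousLinearMap.comp_apply, norm_planeRotation_apply h₀ h₁ h₀₁]

theorem abs_det_fderiv_planeSpiral [FiniteDimensional ℝ E] {x : E}
    (hx : planeProj e₀ e₁ x ≠ 0) :
    |LinearMap.det (fderiv ℝ (planeSpiral e₀ e₁) x : E →ₗ[ℝ] E)| = 1 := by
  obtain ⟨t, u, v, hu, hv, huv, hD⟩ := exists_fderiv_planeSpiral_eq h₀ h₁ h₀₁ hx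
  rw [hD, ContinuousLinearMap.toLinearMap_comp, LinearMap.det_comp, abs_mul,
    abs_det_planeRotation h₀ h₁ h₀₁, det_shear, inner_smul_right, huv]
  norm_num

end Plane

end InnerProductSpace

theorem rotMap_eq_planeSpiral (n : ℕ) (hn : 2 ≤ n) :
    rotMap n hn = planeSpiral (EuclideanSpace.single ⟨0, by omega⟩ 1)
      (EuclideanSpace.single ⟨1, by omega⟩ 1) := by
  have hon := EuclideanSpace.orthonormal_single (𝕜 := ℝ) (ι := Fin n)
  ext x i
  rw [planeSpiral, norm_planeProj_apply_sq (hon.1 _) (hon.1 _) (hon.2 (by simp))]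
  simp only [rotMap, planeRotation_apply, planeProj_apply, planeQuarterTurn_apply,
    EuclideanSpace.inner_single_left, conj_trivial, one_mul, PiLp.add_apply, PiLp.sub_apply,
    PiLp.smul_apply, PiLp.single_apply, smul_eq_mul, WithLp.equiv_symm_apply, PiLp.toLp_apply]
  obtain ⟨_ | _ | k, hk⟩ := i <;> simp [Fin.ext_iff] <;> ring

theorem rotMap_dilatations (n : ℕ) (hn : 2 ≤ n)
    (x : EuclideanSpace ℝ (Fin n))
    (hx : 0 < x ⟨0, by omega⟩ ^ 2 + x ⟨1, by omega⟩ ^ 2) :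
    ‖fderiv ℝ (rotMap n hn) x‖ = 1 + Real.sqrt 2 ∧
    minNorm n (fderiv ℝ (rotMap n hn) x) = Real.sqrt 2 - 1 ∧
    innerDil n (fderiv ℝ (rotMap n hn) x) = (1 + Real.sqrt 2) ^ n ∧
    outerDil n (fderiv ℝ (rotMap n hn) x) = (1 + Real.sqrt 2) ^ n := by
  have hon := EuclideanSpace.orthonormal_single (𝕜 := ℝ) (ι := Fin n)
  have h₀ := hon.1 ⟨0, by omega⟩
  have h₁ := hon.1 ⟨1, by omega⟩
  have h₀₁ := hon.2 (i := ⟨0, by omega⟩) (j := ⟨1, by omega⟩) (by simp)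
  have hP : planeProj (EuclideanSpace.single ⟨0, by omega⟩ 1)
      (EuclideanSpace.single ⟨1, by omega⟩ 1) x ≠ 0 := by
    rw [← norm_ne_zero_iff, ← pow_ne_zero_iff two_ne_zero, norm_planeProj_apply_sq h₀ h₁ h₀₁]
    simpa [EuclideanSpace.inner_single_left] using hx.ne'
  have hnorm := norm_fderiv_planeSpiral h₀ h₁ h₀₁ hP
  have hmin := sInf_norm_fderiv_planeSpiral_apply_image_sphere h₀ h₁ h₀₁ hP
  have hdet := abs_det_fderiv_planeSpiral h₀ h₁ h₀₁ hP
  have hinv : 1 + √2 = (√2 - 1)⁻¹ :=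
    eq_inv_of_mul_eq_one_left (by linear_combination sq_sqrt (zero_le_two (α := ℝ)))
  rw [rotMap_eq_planeSpiral]
  refine ⟨hnorm, hmin, ?_, ?_⟩
  · rw [innerDil, minNorm, hmin, hdet, hinv, inv_pow, one_div]
  · rw [outerDil, hnorm, hdet, div_one]
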